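/- Let $d \ge 1$ and $0 \le t \le d$ be integers, and let $\varepsilon \in \{+1, -1\}$. Then $\sum_{k+m+n = d-t,\ k,m,n \ge 0} \varepsilon^n \dfrac{v^{t^2 - 2dt + t + 2nt + \binom{n+1}{2} - 2km - 2m}}{[n]!\,[2k]^{!!}\,[2m]^{!!}} = \dfrac{v^{(1-d)t}}{[d-t]!} \prod_{j=t+1}^{d} (v^{-j} + \varepsilon\, v^{j})$ holds in $\mathbb{Q}(v)$. -/

import Mathlib

noncomputable section

abbrev K : Type := RatFunc ℚ

/-- The indeterminate `v` in `ℚ(v)`. -/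
def v : K := RatFunc.X

/-- Quantum integer `[m] = (v^m - v^{-m})/(v - v^{-1})`. -/
def qint (m : ℤ) : K := (v ^ m - v ^ (-m)) / (v - v⁻¹)

/-- Quantum factorial `[r]! = ∏_{i=1}^r [i]`. -/
def qfact (r : ℕ) : K := ∏ i ∈ Finset.range r, qint ((i : ℤ) + 1)

/-- Quantum double factorial `[2r]!! = ∏_{i=1}^r [2i]`. -/
def qdfact (r : ℕ) : K := ∏ i ∈ Finset.range r, qint (2 * ((i : ℤ) + 1))

/-- Balanced Gaussian binomial coefficient `[m][m-1]⋯[m-r+1]/[r]!`. -/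
def qbinom (m : ℤ) (r : ℕ) : K := (∏ i ∈ Finset.range r, qint (m - (i : ℤ))) / qfact r

/-- Gaussian binomial with integer lower index, vanishing for negative lower index. -/
def qbinomZ (m r : ℤ) : K := if 0 ≤ r then qbinom m r.toNat else 0

/-!
Put `N = d - t` and group the terms by `r = k + m`. The inner sum over `k + m = r` equals
`v^{-r(r+1)/2} / [r]!`, by a Pascal-type recursion coming from
`[2k + 2m] = v^{2m} [2k] + v^{-2k} [2m]`. What remains is a sum over `n + r = N` which, up to
the factor `v^{t² - 2dt + t - N(N+1)/2}`, is the `q`-binomial expansion of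
`∏_{i<N} (1 + ε v^{2t+2+2i}) / [N]!`; pulling `v^j` out of each factor `1 + ε v^{2j}` gives the
product on the right-hand side.
-/

open Finset

lemma v_ne_zero : v ≠ 0 := RatFunc.X_ne_zero

lemma v_pow_ne_one {n : ℕ} (hn : n ≠ 0) : v ^ n ≠ 1 := by
  intro h
  have hX : (Polynomial.X : Polynomial ℚ) ^ n = 1 :=
    IsFractionRing.injective (Polynomial ℚ) K (by simpa [v] using h)
  simpa [hn] using congrArg Polynomial.natDegree hX

lemma v_zpow_ne_one {m : ℤ} (hm : m ≠ 0) : v ^ m ≠ 1 := by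
  rcases Int.natAbs_eq m with h | h <;> rw [h]
  · rw [zpow_natCast]; exact v_pow_ne_one (by omega)
  · rw [zpow_neg, zpow_natCast, ne_eq, inv_eq_one]; exact v_pow_ne_one (by omega)

lemma v_zpow_sub_zpow_neg_ne_zero {m : ℤ} (hm : m ≠ 0) : v ^ m - v ^ (-m) ≠ 0 := by
  intro h
  apply v_zpow_ne_one (m := m + m) (by omega)
  rw [zpow_add₀ v_ne_zero]
  nth_rw 2 [sub_eq_zero.mp h]
  rw [← zpow_add₀ v_ne_zero, add_neg_cancel, zpow_zero]

lemma qint_ne_zero {m : ℤ} (hm : m ≠ 0) : qint m ≠ 0 := by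
  refine div_ne_zero (v_zpow_sub_zpow_neg_ne_zero hm) ?_
  simpa using v_zpow_sub_zpow_neg_ne_zero one_ne_zero

lemma qint_zero : qint 0 = 0 := by simp [qint]

lemma qint_add (a b : ℤ) : qint (a + b) = v ^ b * qint a + v ^ (-a) * qint b := by
  simp only [qint, neg_add, zpow_add₀ v_ne_zero]
  ring

lemma qint_two_mul (n : ℤ) : qint (2 * n) = (v ^ n + v ^ (-n)) * qint n := by
  simp only [qint, two_mul, neg_add, zpow_add₀ v_ne_zero]
  ring

lemma qfact_succ (r : ℕ) : qfact (r + 1) = qfact r * qint (r + 1) :=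
  prod_range_succ _ r

lemma qdfact_succ (r : ℕ) : qdfact (r + 1) = qdfact r * qint (2 * (r + 1)) :=
  prod_range_succ _ r

lemma two_mul_triangle (n : ℕ) : 2 * ((n * (n + 1) / 2 : ℕ) : ℤ) = n * (n + 1) := by
  have : 2 * (n * (n + 1) / 2) = n * (n + 1) :=
    Nat.mul_div_cancel' (Nat.even_mul_succ_self n).two_dvd
  exact_mod_cast this

lemma triangle_succ (n : ℕ) : (n + 1) * (n + 1 + 1) / 2 = n * (n + 1) / 2 + (n + 1) := by
  rw [show (n + 1) * (n + 1 + 1) = n * (n + 1) + 2 * (n + 1) by ring,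
    Nat.add_mul_div_left _ _ two_pos]

lemma sum_range_sum_range_eq_sum_antidiagonal {M : Type*} [AddCommMonoid M] (N : ℕ)
    (f : ℕ → ℕ → ℕ → M) :
    ∑ k ∈ range (N + 1), ∑ m ∈ range (N + 1 - k), f k m (N - k - m)
      = ∑ p ∈ antidiagonal N, ∑ q ∈ antidiagonal p.2, f q.1 q.2 p.1 := by
  rw [sum_sigma', sum_sigma']
  refine sum_nbij' (fun x ↦ ⟨(N - x.1 - x.2, x.1 + x.2), (x.1, x.2)⟩)
    (fun y ↦ ⟨y.2.1, y.2.2⟩) ?_ ?_ ?_ ?_ ?_ <;>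
  simp only [mem_sigma, mem_range, HasAntidiagonal.mem_antidiagonal, Sigma.forall, Prod.forall]
  · exact fun a b h ↦ ⟨by omega, trivial⟩
  · exact fun a b k m h ↦ by omega
  · simp
  · rintro a _ k m ⟨rfl, rfl⟩
    simp only [Sigma.mk.injEq, Prod.mk.injEq, heq_eq_eq, and_true]
    omega
  · simp

lemma qint_mul_sum_antidiagonal_succ_div_qdfact (r : ℕ) :
    qint (2 * (r + 1)) * ∑ p ∈ antidiagonal (r + 1),
        v ^ (-2 * (p.1 : ℤ) * p.2 - 2 * p.2) / (qdfact p.1 * qdfact p.2)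
      = (1 + v ^ (-2 * ((r : ℤ) + 1))) * ∑ p ∈ antidiagonal r,
          v ^ (-2 * (p.1 : ℤ) * p.2 - 2 * p.2) / (qdfact p.1 * qdfact p.2) := by
  have hv := v_ne_zero
  have hsplit : ∀ p ∈ antidiagonal (r + 1),
      qint (2 * (r + 1)) * (v ^ (-2 * (p.1 : ℤ) * p.2 - 2 * p.2) / (qdfact p.1 * qdfact p.2))
        = v ^ (-2 * (p.1 : ℤ) * p.2) * qint (2 * p.1) / (qdfact p.1 * qdfact p.2)
          + v ^ (-2 * (p.1 : ℤ) * p.2 - 2 * p.2 - 2 * p.1) * qint (2 * p.2)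
            / (qdfact p.1 * qdfact p.2) := by
    rintro ⟨k, m⟩ hp
    rw [HasAntidiagonal.mem_antidiagonal] at hp
    rw [show 2 * ((r : ℤ) + 1) = 2 * k + 2 * m by omega, qint_add]
    simp only [zpow_sub₀ hv, zpow_neg]
    field_simp
  rw [mul_sum, sum_congr rfl hsplit, sum_add_distrib, Nat.sum_antidiagonal_succ,
    Nat.sum_antidiagonal_succ', add_mul, one_mul]
  -- the second half of the split sum is the swap `k ↔ m` of `v ^ (-2 (r + 1))` times the old one
  conv_rhs => arg 2; rw [mul_sum, ← Nat.sum_antidiagonal_swap]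
  simp only [Nat.cast_zero, mul_zero, qint_zero, zero_div, zero_add, Prod.fst_swap, Prod.snd_swap]
  congr 1 <;> refine sum_congr rfl fun ⟨k, m⟩ hp ↦ ?_ <;>
    obtain rfl : k + m = r := HasAntidiagonal.mem_antidiagonal.mp hp
  · have hk : qint (2 * (k + 1)) ≠ 0 := qint_ne_zero (by omega)
    push_cast [qdfact_succ]
    rw [show -2 * ((k : ℤ) + 1) * m = -2 * k * m - 2 * m by ring]
    field_simp
  · have hm : qint (2 * (m + 1)) ≠ 0 := qint_ne_zero (by omega)
    rw [qdfact_succ, show -2 * (k : ℤ) * ↑(m + 1) - 2 * ↑(m + 1) - 2 * k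
        = -2 * (↑(k + m) + 1) + (-2 * m * k - 2 * k) by push_cast; ring, zpow_add₀ hv]
    push_cast
    field_simp

theorem sum_antidiagonal_zpow_div_qdfact_mul_qdfact (r : ℕ) :
    ∑ p ∈ antidiagonal r, v ^ (-2 * (p.1 : ℤ) * p.2 - 2 * p.2) / (qdfact p.1 * qdfact p.2)
      = v ^ (-((r * (r + 1) / 2 : ℕ) : ℤ)) / qfact r := by
  induction r with
  | zero => simp [qfact, qdfact]
  | succ r ih =>
    have hr : qint (2 * (r + 1)) ≠ 0 := qint_ne_zero (by omega)
    have hq : qint (r + 1) ≠ 0 := qint_ne_zero (by omega)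
    have hw : v ^ ((r : ℤ) + 1) ≠ 0 := zpow_ne_zero _ v_ne_zero
    have e1 : v ^ (-((r * (r + 1) / 2 + (r + 1) : ℕ) : ℤ))
        = v ^ (-((r * (r + 1) / 2 : ℕ) : ℤ)) * (v ^ ((r : ℤ) + 1))⁻¹ := by
      rw [← zpow_neg, ← zpow_add₀ v_ne_zero]
      congr 1
      push_cast
      ring
    have e2 : v ^ (-2 * ((r : ℤ) + 1))
        = (v ^ ((r : ℤ) + 1))⁻¹ * (v ^ ((r : ℤ) + 1))⁻¹ := by
      rw [← zpow_neg, ← zpow_add₀ v_ne_zero]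
      ring_nf
    apply mul_left_cancel₀ hr
    rw [qint_mul_sum_antidiagonal_succ_div_qdfact, ih, qint_two_mul, qfact_succ, triangle_succ, e1,
      e2, zpow_neg v ((r : ℤ) + 1)]
    generalize v ^ ((r : ℤ) + 1) = w at hw ⊢
    field_simp

lemma qint_mul_sum_antidiagonal_succ_div_qfact (x : K) (N : ℕ) :
    qint (N + 1) * ∑ p ∈ antidiagonal (N + 1),
        x ^ p.1 * v ^ ((p.1 : ℤ) * (↑(N + 1) - 1)) / (qfact p.1 * qfact p.2)
      = (1 + x * v ^ (2 * (N : ℤ))) * ∑ p ∈ antidiagonal N,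
          x ^ p.1 * v ^ ((p.1 : ℤ) * (N - 1)) / (qfact p.1 * qfact p.2) := by
  have hsplit : ∀ p ∈ antidiagonal (N + 1),
      qint (N + 1) * (x ^ p.1 * v ^ ((p.1 : ℤ) * (↑(N + 1) - 1)) / (qfact p.1 * qfact p.2))
        = x ^ p.1 * v ^ ((p.1 : ℤ) * N + p.2) * qint p.1 / (qfact p.1 * qfact p.2)
          + x ^ p.1 * v ^ ((p.1 : ℤ) * N - p.1) * qint p.2 / (qfact p.1 * qfact p.2) := by
    rintro ⟨n, r⟩ hp
    rw [HasAntidiagonal.mem_antidiagonal] at hp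
    rw [show ((N : ℤ) + 1) = n + r by omega, qint_add, Nat.cast_succ, add_sub_cancel_right]
    simp only [zpow_add₀ v_ne_zero, zpow_sub₀ v_ne_zero, zpow_neg]
    ring
  rw [mul_sum, sum_congr rfl hsplit, sum_add_distrib, Nat.sum_antidiagonal_succ,
    Nat.sum_antidiagonal_succ', add_mul, one_mul, add_comm, mul_sum]
  simp only [Nat.cast_zero, qint_zero, mul_zero, zero_div, zero_add]
  congr 1 <;> refine sum_congr rfl fun ⟨n, r⟩ hp ↦ ?_ <;>
    obtain rfl : n + r = N := HasAntidiagonal.mem_antidiagonal.mp hp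
  · have hr : qint (r + 1) ≠ 0 := qint_ne_zero (by omega)
    rw [qfact_succ, show (n : ℤ) * ↑(n + r) - n = n * (↑(n + r) - 1) by ring]
    push_cast
    field_simp
  · have hn : qint (n + 1) ≠ 0 := qint_ne_zero (by omega)
    rw [qfact_succ, show ((n + 1 : ℕ) : ℤ) * ↑(n + r) + r
        = 2 * ↑(n + r) + n * (↑(n + r) - 1) by push_cast; ring, zpow_add₀ v_ne_zero]
    push_cast
    field_simp
    ring

theorem sum_antidiagonal_qbinomial (x : K) (N : ℕ) :
    ∑ p ∈ antidiagonal N, x ^ p.1 * v ^ ((p.1 : ℤ) * (N - 1)) / (qfact p.1 * qfact p.2)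
      = (∏ i ∈ range N, (1 + x * v ^ (2 * (i : ℤ)))) / qfact N := by
  induction N with
  | zero => simp [qfact]
  | succ N ih =>
    have hN : qint (N + 1) ≠ 0 := qint_ne_zero (by omega)
    apply mul_left_cancel₀ hN
    rw [qint_mul_sum_antidiagonal_succ_div_qfact, ih, prod_range_succ, qfact_succ]
    field_simp

lemma prod_range_one_add_mul_zpow (ε : K) (t N : ℕ) :
    ∏ i ∈ range N, (1 + ε * v ^ (2 * ((t : ℤ) + 1)) * v ^ (2 * (i : ℤ)))
      = v ^ ((N : ℤ) * t + ((N * (N + 1) / 2 : ℕ) : ℤ))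
          * ∏ j ∈ Icc (t + 1) (t + N), (v ^ (-(j : ℤ)) + ε * v ^ (j : ℤ)) := by
  induction N with
  | zero => simp
  | succ N ih =>
    have hw : v ^ ((t : ℤ) + N + 1) ≠ 0 := zpow_ne_zero _ v_ne_zero
    have e1 : v ^ (2 * ((t : ℤ) + 1)) * v ^ (2 * (N : ℤ))
        = v ^ ((t : ℤ) + N + 1) * v ^ ((t : ℤ) + N + 1) := by
      simp only [← zpow_add₀ v_ne_zero]
      ring_nf
    have e2 : v ^ (((N + 1 : ℕ) : ℤ) * t + (((N + 1) * (N + 1 + 1) / 2 : ℕ) : ℤ))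
        = v ^ ((N : ℤ) * t + ((N * (N + 1) / 2 : ℕ) : ℤ)) * v ^ ((t : ℤ) + N + 1) := by
      rw [triangle_succ, ← zpow_add₀ v_ne_zero]
      push_cast
      ring_nf
    rw [prod_range_succ, ih, ← add_assoc, prod_Icc_succ_top (by omega), e2, mul_assoc ε, e1]
    push_cast
    rw [zpow_neg]
    generalize v ^ ((t : ℤ) + N + 1) = w at hw ⊢
    field_simp

lemma sum_antidiagonal_eq_zpow_mul_qbinomial_term (ε : K) (c : ℤ) (t n r N : ℕ)
    (h : n + r = N) :
    ∑ q ∈ antidiagonal r, ε ^ n * v ^ (c + 2 * (n : ℤ) * t + ((n * (n + 1) / 2 : ℕ) : ℤ)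
        - 2 * (q.1 : ℤ) * q.2 - 2 * (q.2 : ℤ)) / (qfact n * qdfact q.1 * qdfact q.2)
      = v ^ (c - ((N * (N + 1) / 2 : ℕ) : ℤ)) * ((ε * v ^ (2 * ((t : ℤ) + 1))) ^ n
          * v ^ ((n : ℤ) * (N - 1)) / (qfact n * qfact r)) := by
  subst h
  set e : ℤ := c + 2 * (n : ℤ) * t + ((n * (n + 1) / 2 : ℕ) : ℤ) with he
  have hsummand : ∀ q ∈ antidiagonal r,
      ε ^ n * v ^ (e - 2 * (q.1 : ℤ) * q.2 - 2 * (q.2 : ℤ))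
          / (qfact n * qdfact q.1 * qdfact q.2)
        = ε ^ n * v ^ e / qfact n
          * (v ^ (-2 * (q.1 : ℤ) * q.2 - 2 * q.2) / (qdfact q.1 * qdfact q.2)) := by
    intro q _
    rw [show e - 2 * (q.1 : ℤ) * q.2 - 2 * q.2 = e + (-2 * (q.1 : ℤ) * q.2 - 2 * q.2) by ring,
      zpow_add₀ v_ne_zero]
    ring
  have hexp : v ^ e * v ^ (-((r * (r + 1) / 2 : ℕ) : ℤ))
      = v ^ (c - (((n + r) * (n + r + 1) / 2 : ℕ) : ℤ))
          * (v ^ (2 * ((t : ℤ) + 1) * n) * v ^ ((n : ℤ) * (↑(n + r) - 1))) := by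
    simp only [← zpow_add₀ v_ne_zero]
    congr 1
    have h1 := two_mul_triangle n
    have h2 := two_mul_triangle r
    have h3 := two_mul_triangle (n + r)
    rw [Nat.cast_add] at h3 ⊢
    linarith
  rw [sum_congr rfl hsummand, ← mul_sum, sum_antidiagonal_zpow_div_qdfact_mul_qdfact, mul_pow,
    ← zpow_natCast (v ^ _), ← zpow_mul]
  linear_combination (ε ^ n / (qfact n * qfact r)) * hexp

theorem stmt17_general (d t : ℕ) (ht : t ≤ d) (ε : K) :
    ∑ k ∈ Finset.range (d - t + 1), ∑ m ∈ Finset.range (d - t + 1 - k),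
      ε ^ (d - t - k - m) *
        v ^ ((t : ℤ) ^ 2 - 2 * (d : ℤ) * t + (t : ℤ)
              + 2 * ((d - t - k - m : ℕ) : ℤ) * t
              + (((d - t - k - m) * (d - t - k - m + 1) / 2 : ℕ) : ℤ)
              - 2 * (k : ℤ) * m - 2 * (m : ℤ)) /
        (qfact (d - t - k - m) * qdfact k * qdfact m)
    = v ^ ((1 - (d : ℤ)) * t) / qfact (d - t) *
        ∏ j ∈ Finset.Icc (t + 1) d, (v ^ (-(j : ℤ)) + ε * v ^ (j : ℤ)) := by
  obtain ⟨N, rfl⟩ : ∃ N, d = t + N := ⟨d - t, by omega⟩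
  simp only [Nat.add_sub_cancel_left]
  rw [sum_range_sum_range_eq_sum_antidiagonal N fun k m n ↦ ε ^ n *
      v ^ ((t : ℤ) ^ 2 - 2 * ((t + N : ℕ) : ℤ) * t + (t : ℤ) + 2 * (n : ℤ) * t
        + ((n * (n + 1) / 2 : ℕ) : ℤ) - 2 * (k : ℤ) * m - 2 * (m : ℤ))
      / (qfact n * qdfact k * qdfact m),
    sum_congr rfl fun p hp ↦ sum_antidiagonal_eq_zpow_mul_qbinomial_term ε _ t p.1 p.2 N
      (HasAntidiagonal.mem_antidiagonal.mp hp),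
    ← mul_sum, sum_antidiagonal_qbinomial, prod_range_one_add_mul_zpow, mul_div_assoc',
    ← mul_assoc, ← zpow_add₀ v_ne_zero, div_mul_eq_mul_div]
  congr 3
  push_cast
  ring

theorem stmt17 (d t : ℕ) (hd : 1 ≤ d) (ht : t ≤ d) (ε : K) (hε : ε = 1 ∨ ε = -1) :
    ∑ k ∈ Finset.range (d - t + 1), ∑ m ∈ Finset.range (d - t + 1 - k),
      ε ^ (d - t - k - m) *
        v ^ ((t : ℤ) ^ 2 - 2 * (d : ℤ) * t + (t : ℤ)
              + 2 * ((d - t - k - m : ℕ) : ℤ) * t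
              + (((d - t - k - m) * (d - t - k - m + 1) / 2 : ℕ) : ℤ)
              - 2 * (k : ℤ) * m - 2 * (m : ℤ)) /
        (qfact (d - t - k - m) * qdfact k * qdfact m)
    = v ^ ((1 - (d : ℤ)) * t) / qfact (d - t) *
        ∏ j ∈ Finset.Icc (t + 1) d, (v ^ (-(j : ℤ)) + ε * v ^ (j : ℤ)) :=
  stmt17_general d t ht ε
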